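/- If the block matrix Γ^(N) = [ [C^(1), −M, −C^(2), 0, ..., 0]; ...; [C^(1), 0, ..., 0, −M, −C^(N)] ] has full column rank, then each of the matrices [M, C^(1)], [M, C^(2)], ..., [M, C^(N)] has full column rank. -/

import Mathlib

/-!
Injectivity of `Γ` passes to `[M, C⁽ⁿ⁾]` along an injective embedding `e` of the column space of
`[M, C⁽ⁿ⁾]` into that of `Γ` such that `Γ e(z)` depends only on `[M, C⁽ⁿ⁾] z`. For `n ≥ 1`, `e(z)`
puts `-z` into the `n`-th block column and zeros elsewhere: block row `n` of `Γ e(z)` is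
`[M, C⁽ⁿ⁾] z` and the other block rows vanish. For `n = 0`, `e(z)` feeds the `C⁽⁰⁾`-part of `z` to
the first block column and minus its `M`-part to the `M`-slot of every block, so that every block
row of `Γ e(z)` equals `[M, C⁽⁰⁾] z`.
-/

open Matrix Function

namespace Matrix

variable {𝔽 ι m n₀ r : Type*} {n : ι → Type*} [Ring 𝔽] [DecidableEq ι] [Fintype ι]
  [Fintype n₀] [Fintype r] [∀ j, Fintype (n j)]

/-- The GCCA block matrix: block row `j` is `[C₀, 0, …, 0, -M, -C j, 0, …, 0]`, the pair
`(-M, -C j)` occupying block column `j`. -/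
def gccaMatrix (C₀ : Matrix m n₀ 𝔽) (M : Matrix m r 𝔽) (C : ∀ j, Matrix m (n j) 𝔽) :
    Matrix (ι × m) (n₀ ⊕ Σ j, r ⊕ n j) 𝔽 :=
  fun p => Sum.elim (C₀ p.2) fun q => if q.1 = p.1 then -fromCols M (C q.1) p.2 q.2 else 0

variable (C₀ : Matrix m n₀ 𝔽) (M : Matrix m r 𝔽) (C : ∀ j, Matrix m (n j) 𝔽)

theorem gccaMatrix_mulVec_sumElim (x : n₀ → 𝔽) (y : (Σ j, r ⊕ n j) → 𝔽) (j : ι) (i : m) :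
    (gccaMatrix C₀ M C *ᵥ Sum.elim x y) (j, i) =
      (C₀ *ᵥ x) i - (M *ᵥ fun c => y ⟨j, .inl c⟩) i - (C j *ᵥ fun c => y ⟨j, .inr c⟩) i := by
  simp only [mulVec, dotProduct, gccaMatrix, Fintype.sum_sum_type, Fintype.sum_sigma,
    Sum.elim_inl, Sum.elim_inr, ite_mul, zero_mul, Finset.sum_ite_irrel, Finset.sum_const_zero,
    Finset.sum_ite_eq', Finset.mem_univ, if_true, neg_mul, Finset.sum_neg_distrib,
    fromCols_apply_inl, fromCols_apply_inr]
  abel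

theorem fromCols_mulVec_injective_of_gccaMatrix_mulVec_injective (j : ι)
    (h : Injective (gccaMatrix C₀ M C).mulVec) : Injective (fromCols M (C j)).mulVec := by
  let embed (z : r ⊕ n j → 𝔽) : n₀ ⊕ (Σ j, r ⊕ n j) → 𝔽 :=
    Sum.elim 0 fun p => Pi.single (M := fun j => r ⊕ n j → 𝔽) j (-z) p.1 p.2
  have h_embed : Injective embed := fun z z' hzz' => by
    funext c
    simpa [embed] using congrFun hzz' (Sum.inr ⟨j, c⟩)
  have h_mulVec_embed (z) (j' : ι) (i : m) : (gccaMatrix C₀ M C *ᵥ embed z) (j', i) =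
      if j' = j then (fromCols M (C j) *ᵥ z) i else 0 := by
    rw [gccaMatrix_mulVec_sumElim]
    rcases eq_or_ne j' j with rfl | hj'
    · simp [mulVec, dotProduct, Fintype.sum_sum_type]
    · simp [mulVec, dotProduct, hj']
  intro z z' hzz'
  refine h_embed (h (funext fun ⟨j', i⟩ => ?_))
  rw [h_mulVec_embed, h_mulVec_embed, hzz']

theorem fromCols_head_mulVec_injective_of_gccaMatrix_mulVec_injective [Nonempty ι]
    (h : Injective (gccaMatrix C₀ M C).mulVec) : Injective (fromCols M C₀).mulVec := by
  let embed (z : r ⊕ n₀ → 𝔽) : n₀ ⊕ (Σ j, r ⊕ n j) → 𝔽 :=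
    Sum.elim (z ∘ Sum.inr) fun p => Sum.elim (-(z ∘ Sum.inl)) 0 p.2
  have h_embed : Injective embed := fun z z' hzz' => by
    obtain ⟨j⟩ := ‹Nonempty ι›
    funext c
    rcases c with c | c
    · simpa [embed] using congrFun hzz' (Sum.inr ⟨j, Sum.inl c⟩)
    · simpa [embed] using congrFun hzz' (Sum.inl c)
  have h_mulVec_embed (z) (j : ι) (i : m) :
      (gccaMatrix C₀ M C *ᵥ embed z) (j, i) = (fromCols M C₀ *ᵥ z) i := by
    rw [gccaMatrix_mulVec_sumElim]
    simp [mulVec, dotProduct, Fintype.sum_sum_type]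
    abel
  intro z z' hzz'
  refine h_embed (h (funext fun ⟨j, i⟩ => ?_))
  rw [h_mulVec_embed, h_mulVec_embed, hzz']

end Matrix

/-- If the GCCA block matrix `Γ` (with `N ≥ 1` block rows, the `j`-th being
`[C⁽⁰⁾, 0, …, 0, −M, −C⁽ʲ⁺¹⁾, 0, …, 0]`) has full column rank, then each matrix
`[M, C⁽ⁿ⁾]`, `n = 0, …, N`, has full column rank. -/
theorem stmt_13 {𝔽 : Type*} [Field 𝔽] {N I R : ℕ} (hN : 1 ≤ N)
    {L : Fin (N + 1) → ℕ}
    (M : Matrix (Fin I) (Fin R) 𝔽)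
    (C : (n : Fin (N + 1)) → Matrix (Fin I) (Fin (L n)) 𝔽)
    (Γ : Matrix (Fin N × Fin I)
      (Fin (L 0) ⊕ ((j : Fin N) × (Fin R ⊕ Fin (L j.succ)))) 𝔽)
    (hΓ1 : ∀ (j : Fin N) (i : Fin I) (l : Fin (L 0)),
      Γ (j, i) (Sum.inl l) = C 0 i l)
    (hΓ2 : ∀ (j : Fin N) (i : Fin I) (j' : Fin N) (r : Fin R),
      Γ (j, i) (Sum.inr ⟨j', Sum.inl r⟩) = if j' = j then -(M i r) else 0)
    (hΓ3 : ∀ (j : Fin N) (i : Fin I) (j' : Fin N) (l : Fin (L j'.succ)),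
      Γ (j, i) (Sum.inr ⟨j', Sum.inr l⟩) = if j' = j then -(C j'.succ i l) else 0)
    (hΓ : Function.Injective Γ.mulVecLin) :
    ∀ n : Fin (N + 1), Function.Injective (Matrix.fromCols M (C n)).mulVecLin := by
  have hΓ_eq : Γ = gccaMatrix (C 0) M fun j : Fin N => C j.succ := by
    ext ⟨j, i⟩ (l | ⟨j', r | l⟩) <;> simp [gccaMatrix, hΓ1, hΓ2, hΓ3]
  rw [coe_mulVecLin, hΓ_eq] at hΓ
  intro n
  rw [coe_mulVecLin]
  induction n using Fin.cases with
  | zero =>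
    have : Nonempty (Fin N) := ⟨⟨0, hN⟩⟩
    exact fromCols_head_mulVec_injective_of_gccaMatrix_mulVec_injective _ _ _ hΓ
  | succ j => exact fromCols_mulVec_injective_of_gccaMatrix_mulVec_injective _ _ _ j hΓ
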